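/- arXiv:math/0104137 — 2 statements merged into one kernel-verified Lean document; each statement's English description precedes it below -/
import Mathlib

section
/- For every integer k ≥ 2 and every n ≥ 0, the Bell numbers of order k satisfy 1 ≤ b_k(n)·b_k(n+2)/b_k(n+1)² ≤ (n+2)/(n+1). -/
open scoped Nat

/-- The `k`-times iterated exponential function: `expIter 0 = id`,
`expIter (k+1) x = exp (expIter k x)`. -/
noncomputable def expIter : ℕ → ℝ → ℝ
  | 0 => id
  | k + 1 => fun x => Real.exp (expIter k x)

/-- `BellB k n` is the `n`-th derivative of the `k`-times iterated exponential at `0`,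
so that `expIter k x = ∑ n, BellB k n * x ^ n / n !`. -/
noncomputable def BellB (k n : ℕ) : ℝ := iteratedDeriv n (expIter k) 0

/-- The Bell numbers of order `k`: `bellOrd k n = BellB k n / expIter k 0`. -/
noncomputable def bellOrd (k n : ℕ) : ℝ := BellB k n / expIter k 0

open Finset
open scoped ContDiff

/-!
Write `a(n) = BellB k n / n!` for the Taylor coefficients of `expIter k`. The two bounds say that
`a` is log-concave and that `(n + 1) a(n+1)² ≤ (n + 2) a(n) a(n+2)`. Differentiating
`expIter (k + 1) = exp ∘ expIter k` gives a recurrence `(n + 1) A(n+1) = ∑ x(j+1) A(n-j)` for the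
coefficients `A` of `expIter (k + 1)`, with weights `x` coming from `expIter k`. When `x` is positive
and log-concave, a symmetrised double sum (a Chebyshev-type inequality) shows by induction on `n`
that `A` is log-concave, and log-concavity of `A` makes the next weights log-concave, so induction
on `k` propagates it. Comparing the recurrence termwise at `n` and `n + 1` gives the other bound.
-/

theorem sum_mul_sum_le_sum_mul_sum_of_cross_le {ι R : Type*} [LinearOrder ι] [CommRing R]
    [LinearOrder R] [IsStrictOrderedRing R] (s : Finset ι) (p q u v : ι → R)
    (hpq : ∀ i ∈ s, ∀ j ∈ s, i ≤ j → p i * q j ≤ p j * q i)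
    (huv : ∀ i ∈ s, ∀ j ∈ s, i ≤ j → u i * v j ≤ u j * v i) :
    (∑ i ∈ s, p i * v i) * (∑ i ∈ s, q i * u i) ≤
      (∑ i ∈ s, p i * u i) * (∑ i ∈ s, q i * v i) := by
  set F : ι → ι → R := fun i j => p i * u i * (q j * v j) - p i * v i * (q j * u j)
  have hF : ∑ i ∈ s, ∑ j ∈ s, F i j =
      (∑ i ∈ s, p i * u i) * (∑ i ∈ s, q i * v i) - (∑ i ∈ s, p i * v i) * (∑ i ∈ s, q i * u i) := by
    simp only [F, sum_mul_sum, ← sum_sub_distrib]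
  have hpair : ∀ i ∈ s, ∀ j ∈ s, 0 ≤ F i j + F j i := by
    intro i hi j hj
    have hfac : F i j + F j i = (p i * q j - p j * q i) * (u i * v j - u j * v i) := by
      simp only [F]; ring
    rw [hfac]
    rcases le_total i j with hij | hji
    · exact mul_nonneg_of_nonpos_of_nonpos (sub_nonpos.2 (hpq i hi j hj hij))
        (sub_nonpos.2 (huv i hi j hj hij))
    · exact mul_nonneg (sub_nonneg.2 (hpq j hj i hi hji)) (sub_nonneg.2 (huv j hj i hi hji))
  have hsum : 0 ≤ 2 * ∑ i ∈ s, ∑ j ∈ s, F i j := by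
    calc (0 : R) ≤ ∑ i ∈ s, ∑ j ∈ s, (F i j + F j i) :=
          sum_nonneg fun i hi => sum_nonneg fun j hj => hpair i hi j hj
      _ = 2 * ∑ i ∈ s, ∑ j ∈ s, F i j := by
          simp only [sum_add_distrib]
          rw [sum_comm (f := fun i j => F j i)]
          ring
  rw [hF] at hsum
  linarith

theorem mul_succ_le_succ_mul_of_logConcave {a : ℕ → ℝ} (ha : ∀ n, 0 < a n) {N : ℕ}
    (hlc : ∀ m, m + 2 ≤ N → a m * a (m + 2) ≤ a (m + 1) ^ 2) {i j : ℕ} (hij : i ≤ j)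
    (hj : j + 1 ≤ N) : a i * a (j + 1) ≤ a (i + 1) * a j := by
  induction j, hij using Nat.le_induction with
  | base => exact (mul_comm _ _).le
  | succ j hij ih =>
    refine le_of_mul_le_mul_right ?_ (ha (j + 1))
    calc a i * a (j + 2) * a (j + 1) = a i * a (j + 1) * a (j + 2) := by ring
      _ ≤ a (i + 1) * a j * a (j + 2) := mul_le_mul_of_nonneg_right (ih (by omega)) (ha _).le
      _ = a (i + 1) * (a j * a (j + 2)) := by ring
      _ ≤ a (i + 1) * a (j + 1) ^ 2 := mul_le_mul_of_nonneg_left (hlc j (by omega)) (ha _).le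
      _ = a (i + 1) * a (j + 1) * a (j + 1) := by ring

theorem sum_range_mul_ite_sub {f A : ℕ → ℝ} {a N : ℕ} (h : a < N) :
    ∑ i ∈ range N, f i * (if i ≤ a then A (a - i) else 0) =
      ∑ i ∈ range (a + 1), f i * A (a - i) := by
  rw [← sum_subset (range_subset_range.2 h)]
  · exact sum_congr rfl fun i hi => by simp [Nat.lt_succ_iff.1 (mem_range.1 hi)]
  · intro i _ hi
    simp [show ¬ i ≤ a by simpa [Nat.lt_succ_iff] using hi]

section Recurrence

variable {x A : ℕ → ℝ}

theorem pos_of_recurrence (hx : ∀ i, 0 < x i) (hA0 : 0 < A 0)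
    (hrec : ∀ n : ℕ, ((n : ℝ) + 1) * A (n + 1) = ∑ j ∈ range (n + 1), x (j + 1) * A (n - j)) :
    ∀ n, 0 < A n := by
  intro n
  induction n using Nat.strong_induction_on with
  | _ n ih =>
    rcases n with _ | n
    · exact hA0
    · have hsum : 0 < ∑ j ∈ range (n + 1), x (j + 1) * A (n - j) :=
        sum_pos (fun j _ => mul_pos (hx _) (ih _ (by omega))) ⟨0, by simp⟩
      rw [← hrec] at hsum
      exact pos_of_mul_pos_right hsum (by positivity)

theorem sum_range_mul_eq_of_recurrence (hx0 : x 0 = 1)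
    (hrec : ∀ n : ℕ, ((n : ℝ) + 1) * A (n + 1) = ∑ j ∈ range (n + 1), x (j + 1) * A (n - j))
    (m : ℕ) : ∑ i ∈ range (m + 1), x i * A (m - i) = (m + 1) * A m := by
  rcases m with _ | m
  · simp [hx0]
  · rw [sum_range_succ', hx0]
    simp only [Nat.add_sub_add_right]
    rw [← hrec, Nat.sub_zero]
    push_cast
    ring

theorem logConcave_of_recurrence (hx : ∀ i, 0 < x i) (hx0 : x 0 = 1)
    (hxlc : ∀ n, x n * x (n + 2) ≤ x (n + 1) ^ 2) (hA0 : 0 < A 0)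
    (hrec : ∀ n : ℕ, ((n : ℝ) + 1) * A (n + 1) = ∑ j ∈ range (n + 1), x (j + 1) * A (n - j))
    (n : ℕ) : A n * A (n + 2) ≤ A (n + 1) ^ 2 := by
  have hA := pos_of_recurrence hx hA0 hrec
  induction n using Nat.strong_induction_on with
  | _ n ih =>
  let D : ℕ → ℕ → ℝ := fun a i => if i ≤ a then A (a - i) else 0
  have hD0 : ∀ a i, 0 ≤ D a i := fun a i => by
    simp only [D]
    split_ifs
    exacts [(hA _).le, le_rfl]
  have hcross := sum_mul_sum_le_sum_mul_sum_of_cross_le (range (n + 2)) x (fun i => x (i + 1))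
    (D (n + 1)) (D n) (fun i _ j _ hij => by
      simpa [mul_comm] using mul_succ_le_succ_mul_of_logConcave hx (fun m _ => hxlc m) hij le_rfl)
    (fun i _ j hj hij => by
      rcases (show j ≤ n ∨ j = n + 1 by simp at hj; omega) with hjn | rfl
      · simp only [D, show i ≤ n + 1 by omega, show j ≤ n + 1 by omega, hjn,
          show i ≤ n by omega, if_true]
        rw [show n + 1 - i = n - i + 1 by omega, show n + 1 - j = n - j + 1 by omega,
          mul_comm (A (n - i + 1))]
        exact mul_succ_le_succ_mul_of_logConcave hA (N := n + 1) (fun m hm => ih m (by omega))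
          (by omega : n - j ≤ n - i) (by omega)
      · simp only [D, show ¬ n + 1 ≤ n by omega, if_false, mul_zero]
        exact mul_nonneg (hD0 _ _) (hD0 _ _))
  -- the four sums are `(n + 1) A n`, `(n + 2) A (n + 2)`, `(n + 2) A (n + 1)`, `(n + 1) A (n + 1)`
  simp only [D, sum_range_mul_ite_sub (Nat.lt_succ_self _),
    sum_range_mul_ite_sub (Nat.lt_succ_of_lt (Nat.lt_succ_self n))] at hcross
  rw [sum_range_mul_eq_of_recurrence hx0 hrec, sum_range_mul_eq_of_recurrence hx0 hrec, ← hrec,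
    ← hrec] at hcross
  have hprod : ((n : ℝ) + 1) * (n + 2) * (A n * A (n + 2)) ≤
      ((n : ℝ) + 1) * (n + 2) * A (n + 1) ^ 2 := by
    push_cast at hcross
    linear_combination hcross
  exact le_of_mul_le_mul_left hprod (by positivity)

theorem succ_mul_sq_le_of_recurrence (hx : ∀ i, 0 ≤ x i) (hA : ∀ n, 0 < A n)
    (hAlc : ∀ n, A n * A (n + 2) ≤ A (n + 1) ^ 2)
    (hrec : ∀ n : ℕ, ((n : ℝ) + 1) * A (n + 1) = ∑ j ∈ range (n + 1), x (j + 1) * A (n - j))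
    (n : ℕ) : ((n : ℝ) + 1) * A (n + 1) ^ 2 ≤ ((n : ℝ) + 2) * (A n * A (n + 2)) := by
  have hterm : ∀ j ∈ range (n + 1),
      A (n + 1) * (x (j + 1) * A (n - j)) ≤ A n * (x (j + 1) * A (n + 1 - j)) := by
    intro j hj
    have hjn : j ≤ n := Nat.lt_succ_iff.1 (mem_range.1 hj)
    have hratio : A (n - j) * A (n + 1) ≤ A (n - j + 1) * A n :=
      mul_succ_le_succ_mul_of_logConcave hA (fun m _ => hAlc m) (Nat.sub_le n j) le_rfl
    rw [show n + 1 - j = n - j + 1 by omega]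
    nlinarith [hx (j + 1)]
  calc ((n : ℝ) + 1) * A (n + 1) ^ 2 = A (n + 1) * (((n : ℝ) + 1) * A (n + 1)) := by ring
    _ = ∑ j ∈ range (n + 1), A (n + 1) * (x (j + 1) * A (n - j)) := by rw [hrec, mul_sum]
    _ ≤ ∑ j ∈ range (n + 1), A n * (x (j + 1) * A (n + 1 - j)) := sum_le_sum hterm
    _ ≤ ∑ j ∈ range (n + 2), A n * (x (j + 1) * A (n + 1 - j)) :=
        sum_le_sum_of_subset_of_nonneg (range_subset_range.2 (by omega))
          fun j _ _ => mul_nonneg (hA n).le (mul_nonneg (hx _) (hA _).le)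
    _ = ((n : ℝ) + 2) * (A n * A (n + 2)) := by
        rw [← mul_sum, ← hrec (n + 1)]
        push_cast
        ring

end Recurrence

theorem contDiff_expIter (k : ℕ) : ContDiff ℝ ∞ (expIter k) := by
  induction k with
  | zero => exact contDiff_id
  | succ k ih => exact Real.contDiff_exp.comp ih

theorem deriv_expIter_succ (k : ℕ) :
    deriv (expIter (k + 1)) = deriv (expIter k) * expIter (k + 1) := by
  funext x
  have hk : HasDerivAt (expIter k) (deriv (expIter k) x) x :=
    ((contDiff_expIter k).differentiable (by simp) x).hasDerivAt
  have hk1 : HasDerivAt (expIter (k + 1)) (Real.exp (expIter k x) * deriv (expIter k) x) x :=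
    (Real.hasDerivAt_exp _).comp x hk
  rw [hk1.deriv, mul_comm]
  rfl

theorem BellB_succ_succ (k n : ℕ) :
    BellB (k + 1) (n + 1) =
      ∑ j ∈ range (n + 1), n.choose j * BellB k (j + 1) * BellB (k + 1) (n - j) := by
  have hd : ContDiff ℝ ∞ (deriv (expIter k)) :=
    (contDiff_infty_iff_deriv.1 (contDiff_expIter k)).2
  simp only [BellB]
  rw [iteratedDeriv_succ', deriv_expIter_succ,
    iteratedDeriv_mul (hd.of_le (mod_cast le_top)).contDiffAt
      ((contDiff_expIter _).of_le (mod_cast le_top)).contDiffAt]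
  simp only [← iteratedDeriv_succ']

theorem BellB_zero (k : ℕ) : BellB k 0 = expIter k 0 := by
  simp [BellB]

theorem BellB_one (n : ℕ) : BellB 1 n = 1 := by
  have h : expIter 1 = Real.exp := rfl
  rw [BellB, h, iteratedDeriv_eq_iterate, Real.iter_deriv_exp, Real.exp_zero]

theorem natCast_le_expIter_zero (k : ℕ) : (k : ℝ) ≤ expIter k 0 := by
  induction k with
  | zero => simp [expIter]
  | succ k ih =>
    have hexp : expIter (k + 1) 0 = Real.exp (expIter k 0) := rfl
    push_cast
    linarith [Real.add_one_le_exp (expIter k 0)]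

noncomputable def expIterCoeff (k n : ℕ) : ℝ := BellB k n / n !

/-- The Taylor coefficients of `1 + x * (expIter k)' x`: differentiating
`f = expIter (k + 1) = exp ∘ expIter k` gives `f + x f' = f * (1 + x * (expIter k)')`. -/
noncomputable def expIterWeight (k : ℕ) : ℕ → ℝ
  | 0 => 1
  | i + 1 => (i + 1) * expIterCoeff k (i + 1)

theorem expIterCoeff_succ_recurrence (k n : ℕ) :
    ((n : ℝ) + 1) * expIterCoeff (k + 1) (n + 1) =
      ∑ j ∈ range (n + 1), expIterWeight k (j + 1) * expIterCoeff (k + 1) (n - j) := by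
  have hlhs : ((n : ℝ) + 1) * expIterCoeff (k + 1) (n + 1) = BellB (k + 1) (n + 1) / n ! := by
    rw [expIterCoeff, Nat.factorial_succ]
    push_cast
    field_simp
  rw [hlhs, BellB_succ_succ, sum_div]
  refine sum_congr rfl fun j hj => ?_
  have hjn : j ≤ n := Nat.lt_succ_iff.1 (mem_range.1 hj)
  simp only [expIterWeight, expIterCoeff]
  rw [Nat.cast_choose ℝ hjn, Nat.factorial_succ]
  push_cast
  field_simp

theorem expIterCoeff_one (n : ℕ) : expIterCoeff 1 n = (n ! : ℝ)⁻¹ := by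
  rw [expIterCoeff, BellB_one, one_div]

theorem expIterWeight_pos {k : ℕ} (h : ∀ n, 0 < expIterCoeff k n) (i : ℕ) :
    0 < expIterWeight k i := by
  rcases i with _ | i
  · exact one_pos
  · exact mul_pos (by positivity) (h _)

theorem expIterCoeff_pos (k n : ℕ) : 0 < expIterCoeff (k + 1) n := by
  induction k generalizing n with
  | zero => rw [expIterCoeff_one]; positivity
  | succ k ih =>
    refine pos_of_recurrence (expIterWeight_pos ih) ?_ (expIterCoeff_succ_recurrence _) n
    rw [expIterCoeff, BellB_zero, Nat.factorial_zero, Nat.cast_one, div_one]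
    exact Real.exp_pos _

theorem expIterCoeff_one_logConcave (n : ℕ) :
    expIterCoeff 1 n * expIterCoeff 1 (n + 2) ≤ expIterCoeff 1 (n + 1) ^ 2 := by
  simp only [expIterCoeff_one, Nat.factorial_succ]
  push_cast
  rw [← mul_inv, inv_pow]
  gcongr
  nlinarith [show (0 : ℝ) < (n ! : ℝ) by positivity]

theorem expIterWeight_logConcave {k : ℕ} (hk : 1 ≤ k) (hpos : ∀ n, 0 < expIterCoeff k n)
    (hlc : ∀ n, expIterCoeff k n * expIterCoeff k (n + 2) ≤ expIterCoeff k (n + 1) ^ 2)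
    (n : ℕ) : expIterWeight k n * expIterWeight k (n + 2) ≤ expIterWeight k (n + 1) ^ 2 := by
  rcases n with _ | m
  · -- for `k ≥ 2` this follows from `hlc 0` since `expIterCoeff k 0 = expIter k 0 ≥ 2`
    have key : 2 * expIterCoeff k 2 ≤ expIterCoeff k 1 ^ 2 := by
      obtain rfl | hk2 := eq_or_lt_of_le hk
      · simp [expIterCoeff_one, Nat.factorial]
      · have ha0 : 2 ≤ expIterCoeff k 0 := by
          rw [expIterCoeff, BellB_zero, Nat.factorial_zero, Nat.cast_one, div_one]
          exact le_trans (by exact_mod_cast hk2) (natCast_le_expIter_zero k)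
        nlinarith [hlc 0, hpos 2]
    simpa [expIterWeight, one_add_one_eq_two] using key
  · have hm : ((m : ℝ) + 1) * (m + 3) ≤ (m + 2) ^ 2 := by nlinarith
    calc expIterWeight k (m + 1) * expIterWeight k (m + 3)
        = ((m : ℝ) + 1) * (m + 3) * (expIterCoeff k (m + 1) * expIterCoeff k (m + 3)) := by
          simp only [expIterWeight]; push_cast; ring
      _ ≤ ((m : ℝ) + 2) ^ 2 * expIterCoeff k (m + 2) ^ 2 :=
          mul_le_mul hm (hlc (m + 1)) (by positivity [hpos (m + 1), hpos (m + 3)]) (by positivity)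
      _ = expIterWeight k (m + 2) ^ 2 := by
          simp only [expIterWeight]; push_cast; ring

theorem expIterCoeff_logConcave (k n : ℕ) :
    expIterCoeff (k + 1) n * expIterCoeff (k + 1) (n + 2) ≤ expIterCoeff (k + 1) (n + 1) ^ 2 := by
  induction k generalizing n with
  | zero => exact expIterCoeff_one_logConcave n
  | succ k ih =>
    exact logConcave_of_recurrence (expIterWeight_pos (expIterCoeff_pos k))
      rfl (expIterWeight_logConcave (Nat.le_add_left 1 k) (expIterCoeff_pos k) ih)
      (expIterCoeff_pos (k + 1) 0) (expIterCoeff_succ_recurrence _) n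

theorem bellOrd_ratio_eq {k : ℕ} (hk : expIter k 0 ≠ 0) (n : ℕ) :
    bellOrd k n * bellOrd k (n + 2) / bellOrd k (n + 1) ^ 2 =
      ((n : ℝ) + 2) / ((n : ℝ) + 1) *
        (expIterCoeff k n * expIterCoeff k (n + 2) / expIterCoeff k (n + 1) ^ 2) := by
  simp only [bellOrd, expIterCoeff, Nat.factorial_succ]
  push_cast
  field_simp
  ring

/-- For every integer `k ≥ 2` and every `n ≥ 0`,
`1 ≤ bellOrd k n * bellOrd k (n+2) / bellOrd k (n+1) ^ 2 ≤ (n+2)/(n+1)`. -/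
theorem bellOrd_ratio_bounds (k : ℕ) (hk : 2 ≤ k) (n : ℕ) :
    1 ≤ bellOrd k n * bellOrd k (n + 2) / bellOrd k (n + 1) ^ 2 ∧
      bellOrd k n * bellOrd k (n + 2) / bellOrd k (n + 1) ^ 2 ≤
        ((n : ℝ) + 2) / ((n : ℝ) + 1) := by
  obtain ⟨k, rfl⟩ : ∃ j, k = j + 2 := ⟨k - 2, by omega⟩
  set a := expIterCoeff (k + 2)
  have hpos : ∀ m, 0 < a m := expIterCoeff_pos (k + 1)
  have hlc : ∀ m, a m * a (m + 2) ≤ a (m + 1) ^ 2 := expIterCoeff_logConcave (k + 1)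
  have hlower : ((n : ℝ) + 1) * a (n + 1) ^ 2 ≤ ((n : ℝ) + 2) * (a n * a (n + 2)) :=
    succ_mul_sq_le_of_recurrence (fun i => (expIterWeight_pos (expIterCoeff_pos k) i).le) hpos
      hlc (expIterCoeff_succ_recurrence _) n
  rw [bellOrd_ratio_eq (k := k + 2) (Real.exp_pos _).ne']
  have hsq : 0 < a (n + 1) ^ 2 := pow_pos (hpos _) 2
  constructor
  · rw [div_mul_div_comm, one_le_div (by positivity)]
    linarith
  · exact mul_le_of_le_one_right (by positivity) ((div_le_one hsq).2 (hlc n))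
end

section
/- The best constant in condition (c-2) for the classical Bell numbers is 2: if c > 0 is a real number satisfying b_2(n+m) ≤ c^{n+m}·b_2(n)·b_2(m) for all n, m ≥ 0, then c ≥ 2; and c = 2 does satisfy these inequalities. -/
/-!
Differentiating `exp (exp x) = ∑ₖ exp (k x) / k!` termwise gives Dobinski's formula
`e · b₂(N) = ∑ₖ kᴺ / k!`, and Leibniz's rule applied to
`(exp ∘ exp)' = exp · (exp ∘ exp)` gives `b₂(n + 1) = ∑ᵢ C(n, i) b₂(i)`.

In terms of the coefficients `β n = b₂(n) / n!` the recurrence reads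
`(n + 1) β (n + 1) = ∑_{k ≤ n} β k / (n - k)!`. Splitting this sum for `β (n + m)`
at `k = n` and using `β m ≥ 1 / m!` on the first part gives `β (n + m) ≤ β n β m`
by induction on `m`, that is
`b₂(n + m) ≤ C(n + m, m) b₂(n) b₂(m) ≤ 2ⁿ⁺ᵐ b₂(n) b₂(m)`.

Conversely, let `E = ⌈eᵐ⌉` and `n = m E`. The single Dobinski term `k = 2E` gives
`(2E)²ⁿ ≤ e (2E)²ᴱ b₂(2n)`, and `kⁿ ≤ (n / (e m))ⁿ e^{m k}` summed over `k` gives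
`e b₂(n) ≤ (E / e)ⁿ e^{eᵐ}`. Inserted into `b₂(2n) ≤ c²ⁿ b₂(n)²` these yield
`2ᵐ ≤ 4 e cᵐ` for every `m ≥ 1`, hence `c ≥ 2`.
-/

open scoped Nat

/-- The classical Bell numbers: `bellTwo n = B₂(n) / e`, where `B₂(n)` is the `n`-th
derivative of `exp (exp x)` at `x = 0`; equivalently
`exp (exp x - 1) = ∑ n, bellTwo n * x ^ n / n !`. -/
noncomputable def bellTwo (n : ℕ) : ℝ :=
  iteratedDeriv n (fun x : ℝ => Real.exp (Real.exp x)) 0 / Real.exp 1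

open Real Finset

theorem tsum_pow_div_factorial (x : ℝ) : ∑' k : ℕ, x ^ k / k ! = exp x := by
  rw [congrFun exp_eq_exp_ℝ x, NormedSpace.exp_eq_tsum_div]

/-- `(N / (e t))ᴺ` is the maximum of `xᴺ e^{-t x}`, attained at `x = N / t`. -/
theorem pow_le_mul_exp (N : ℕ) {t x : ℝ} (ht : 0 < t) (hx : 0 ≤ x) :
    x ^ N ≤ (N / (exp 1 * t)) ^ N * exp (t * x) := by
  rcases N.eq_zero_or_pos with rfl | hN
  · simpa using one_le_exp (mul_nonneg ht.le hx)
  set y := t * x / N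
  have hy : y ≤ exp (y - 1) := by linarith [add_one_le_exp (y - 1)]
  calc x ^ N = (N / t) ^ N * y ^ N := by rw [← mul_pow]; simp only [y]; field_simp
    _ ≤ (N / t) ^ N * exp (y - 1) ^ N := by gcongr
    _ = (N / (exp 1 * t)) ^ N * exp (t * x) := by
      rw [← exp_nat_mul, mul_sub, mul_div_cancel₀ _ (by positivity), mul_one, exp_sub,
        ← exp_one_pow, div_pow, div_pow, mul_pow]
      field_simp

theorem le_of_forall_pow_le_mul_pow {x y C : ℝ} (hy : 0 < y)
    (h : ∀ m : ℕ, 0 < m → x ^ m ≤ C * y ^ m) : x ≤ y := by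
  by_contra! hxy
  have hxy' : 1 < x / y := (one_lt_div hy).2 hxy
  obtain ⟨m, hm⟩ := pow_unbounded_of_one_lt C hxy'
  have hC : (x / y) ^ (m + 1) ≤ C := by
    rw [div_pow, div_le_iff₀ (by positivity)]
    exact h (m + 1) m.succ_pos
  linarith [pow_le_pow_right₀ hxy'.le (m.le_add_right 1)]

theorem summable_pow_mul_exp_div_factorial (N : ℕ) (y : ℝ) :
    Summable fun k : ℕ => (k : ℝ) ^ N * exp (k * y) / k ! := by
  refine .of_nonneg_of_le (fun k => by positivity) (fun k => ?_)
    ((summable_pow_div_factorial (exp (y + 1))).mul_left ((N / (exp 1 * 1)) ^ N))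
  calc (k : ℝ) ^ N * exp (k * y) / k !
      ≤ (N / (exp 1 * 1)) ^ N * exp (1 * k) * exp (k * y) / k ! := by
        gcongr; exact pow_le_mul_exp N one_pos k.cast_nonneg
    _ = (N / (exp 1 * 1)) ^ N * (exp (y + 1) ^ k / k !) := by
        rw [← exp_nat_mul, mul_assoc, ← exp_add]; ring_nf

theorem hasDerivAt_tsum_pow_mul_exp (N : ℕ) (x : ℝ) :
    HasDerivAt (fun y => ∑' k : ℕ, (k : ℝ) ^ N * exp (k * y) / k !)
      (∑' k : ℕ, (k : ℝ) ^ (N + 1) * exp (k * x) / k !) x := by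
  refine hasDerivAt_tsum_of_isPreconnected
    (g := fun (k : ℕ) y => (k : ℝ) ^ N * exp (k * y) / k !)
    (g' := fun (k : ℕ) y => (k : ℝ) ^ (N + 1) * exp (k * y) / k !)
    (summable_pow_mul_exp_div_factorial (N + 1) (x + 1)) isOpen_Iio isPreconnected_Iio
    (fun k y _ => ?_) (fun k y hy => ?_) (lt_add_one x)
    (summable_pow_mul_exp_div_factorial N x) (lt_add_one x)
  · have h := ((hasDerivAt_mul_const (x := y) (k : ℝ)).exp.const_mul ((k : ℝ) ^ N)).div_const
      (k ! : ℝ)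
    simp only [mul_comm _ (k : ℝ)] at h
    exact h.congr_deriv (by ring)
  · rw [norm_of_nonneg (by positivity)]
    gcongr
    exact hy.le

theorem iteratedDeriv_exp_exp (N : ℕ) :
    iteratedDeriv N (fun x => exp (exp x)) =
      fun x => ∑' k : ℕ, (k : ℝ) ^ N * exp (k * x) / k ! := by
  induction N with
  | zero =>
    ext x
    rw [iteratedDeriv_zero, ← tsum_pow_div_factorial]
    exact tsum_congr fun k => by rw [pow_zero, one_mul, exp_nat_mul]
  | succ N ih =>
    ext x
    rw [iteratedDeriv_succ, ih]
    exact (hasDerivAt_tsum_pow_mul_exp N x).deriv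

theorem bellTwo_eq_tsum (N : ℕ) : bellTwo N = (∑' k : ℕ, (k : ℝ) ^ N / k !) / exp 1 := by
  simp [bellTwo, iteratedDeriv_exp_exp]

theorem bellTwo_zero : bellTwo 0 = 1 := by simp [bellTwo]

theorem bellTwo_succ (n : ℕ) :
    bellTwo (n + 1) = ∑ i ∈ range (n + 1), (n.choose i : ℝ) * bellTwo i := by
  have hderiv : deriv (fun x => exp (exp x)) = (fun x => exp (exp x)) * exp := by
    ext x; simp
  have hf : ContDiff ℝ n fun x => exp (exp x) := contDiff_exp.comp contDiff_exp
  rw [bellTwo, iteratedDeriv_succ', hderiv,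
    iteratedDeriv_mul hf.contDiffAt contDiff_exp.contDiffAt, sum_div]
  refine sum_congr rfl fun i _ => ?_
  simp [bellTwo, iteratedDeriv_eq_iterate, iter_deriv_exp, mul_div_assoc]

theorem one_le_bellTwo (n : ℕ) : 1 ≤ bellTwo n := by
  induction n using Nat.strong_induction_on with
  | _ n ih =>
    rcases n with _ | n
    · exact bellTwo_zero.ge
    rw [bellTwo_succ]
    calc (1 : ℝ) ≤ n.choose n * bellTwo n := by simpa using ih n n.lt_add_one
      _ ≤ ∑ i ∈ range (n + 1), (n.choose i : ℝ) * bellTwo i :=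
        single_le_sum (fun i hi => mul_nonneg (Nat.cast_nonneg _)
          (zero_le_one.trans (ih i (mem_range.1 hi)))) (self_mem_range_succ n)

/-- The `n`-th Taylor coefficient of `exp (exp x - 1)`. -/
noncomputable def bellTwoCoeff (n : ℕ) : ℝ := bellTwo n / n !

theorem bellTwoCoeff_zero : bellTwoCoeff 0 = 1 := by simp [bellTwoCoeff, bellTwo_zero]

theorem inv_factorial_le_bellTwoCoeff (n : ℕ) : (n ! : ℝ)⁻¹ ≤ bellTwoCoeff n := by
  rw [bellTwoCoeff, inv_eq_one_div]
  gcongr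
  exact one_le_bellTwo n

theorem bellTwoCoeff_nonneg (n : ℕ) : 0 ≤ bellTwoCoeff n :=
  (inv_nonneg.2 (Nat.cast_nonneg _)).trans (inv_factorial_le_bellTwoCoeff n)

theorem succ_mul_bellTwoCoeff_succ (n : ℕ) :
    (n + 1) * bellTwoCoeff (n + 1) = ∑ k ∈ range (n + 1), bellTwoCoeff k / (n - k)! := by
  have hlhs : (n + 1) * bellTwoCoeff (n + 1) = bellTwo (n + 1) / n ! := by
    rw [bellTwoCoeff, Nat.factorial_succ]; push_cast; field_simp
  rw [hlhs, bellTwo_succ, sum_div]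
  refine sum_congr rfl fun k hk => ?_
  have hkn := Nat.lt_succ_iff.1 (mem_range.1 hk)
  have hchoose : (n.choose k : ℝ) ≠ 0 := Nat.cast_ne_zero.2 (Nat.choose_pos hkn).ne'
  rw [bellTwoCoeff, ← Nat.choose_mul_factorial_mul_factorial hkn]
  push_cast
  field_simp

theorem inv_factorial_add_le_bellTwoCoeff_div (a m : ℕ) :
    ((a + m)! : ℝ)⁻¹ ≤ bellTwoCoeff m / a ! := by
  have hfac : (a ! * m ! : ℝ) ≤ (a + m)! := by
    exact_mod_cast Nat.le_of_dvd (Nat.factorial_pos _)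
      (Nat.factorial_mul_factorial_dvd_factorial_add a m)
  calc ((a + m)! : ℝ)⁻¹ ≤ (a ! * m ! : ℝ)⁻¹ := by gcongr
    _ = (m ! : ℝ)⁻¹ / a ! := by rw [mul_inv, div_eq_mul_inv, mul_comm]
    _ ≤ bellTwoCoeff m / a ! := by gcongr; exact inv_factorial_le_bellTwoCoeff m

theorem bellTwoCoeff_add_le_of_forall_le (n m : ℕ)
    (ih : ∀ j ≤ m, bellTwoCoeff (n + 1 + j) ≤ bellTwoCoeff (n + 1) * bellTwoCoeff j) :
    bellTwoCoeff (n + 1 + (m + 1)) ≤ bellTwoCoeff (n + 1) * bellTwoCoeff (m + 1) := by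
  have hlow : ∑ k ∈ range (n + 1), bellTwoCoeff k / (n + 1 + m - k)! ≤
      bellTwoCoeff (m + 1) * ((n + 1) * bellTwoCoeff (n + 1)) := by
    rw [succ_mul_bellTwoCoeff_succ n, mul_sum]
    gcongr with k hk
    rw [show n + 1 + m - k = (n - k) + (m + 1) by have := mem_range.1 hk; omega, div_eq_mul_inv,
      mul_div_left_comm]
    gcongr
    · exact bellTwoCoeff_nonneg k
    · exact inv_factorial_add_le_bellTwoCoeff_div _ _
  have hhigh : ∑ j ∈ range (m + 1), bellTwoCoeff (n + 1 + j) / (n + 1 + m - (n + 1 + j))! ≤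
      bellTwoCoeff (n + 1) * ((m + 1) * bellTwoCoeff (m + 1)) := by
    rw [succ_mul_bellTwoCoeff_succ m, mul_sum]
    gcongr with j hj
    rw [show n + 1 + m - (n + 1 + j) = m - j by omega, mul_div_assoc']
    gcongr
    exact ih j (Nat.lt_succ_iff.1 (mem_range.1 hj))
  have hsum := succ_mul_bellTwoCoeff_succ (n + 1 + m)
  rw [show n + 1 + m + 1 = n + 1 + (m + 1) by omega, sum_range_add] at hsum
  refine le_of_mul_le_mul_left (a := ((n + 1 + m : ℕ) + 1 : ℝ)) ?_ (by positivity)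
  calc _ = _ := hsum
    _ ≤ _ := add_le_add hlow hhigh
    _ = _ := by push_cast; ring

theorem bellTwoCoeff_add_le (n m : ℕ) :
    bellTwoCoeff (n + m) ≤ bellTwoCoeff n * bellTwoCoeff m := by
  induction m using Nat.strong_induction_on with
  | _ m ih =>
    rcases n with _ | n
    · simp [bellTwoCoeff_zero]
    rcases m with _ | m
    · simp [bellTwoCoeff_zero]
    exact bellTwoCoeff_add_le_of_forall_le n m fun j hj => ih j (by omega)

theorem bellTwo_add_le_choose_mul (n m : ℕ) :
    bellTwo (n + m) ≤ (n + m).choose m * (bellTwo n * bellTwo m) := by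
  have h := (div_le_iff₀' (by positivity)).1 (bellTwoCoeff_add_le n m)
  calc bellTwo (n + m) ≤ (n + m)! * (bellTwoCoeff n * bellTwoCoeff m) := h
    _ = (n + m).choose m * (bellTwo n * bellTwo m) := by
      rw [bellTwoCoeff, bellTwoCoeff, ← Nat.add_choose_mul_factorial_mul_factorial n m]
      push_cast
      field_simp

theorem bellTwo_add_le_two_pow_mul (n m : ℕ) :
    bellTwo (n + m) ≤ 2 ^ (n + m) * (bellTwo n * bellTwo m) := by
  refine (bellTwo_add_le_choose_mul n m).trans (mul_le_mul_of_nonneg_right ?_ ?_)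
  · exact_mod_cast Nat.choose_le_two_pow _ _
  · exact mul_nonneg (zero_le_one.trans (one_le_bellTwo n)) (zero_le_one.trans (one_le_bellTwo m))

theorem pow_div_factorial_le_bellTwo (N k : ℕ) : (k : ℝ) ^ N / k ! / exp 1 ≤ bellTwo N := by
  have hsum : Summable fun k : ℕ => (k : ℝ) ^ N / k ! := by
    simpa using summable_pow_mul_exp_div_factorial N 0
  rw [bellTwo_eq_tsum]
  gcongr
  exact hsum.le_tsum k fun j _ => by positivity

theorem bellTwo_le_pow_mul_exp_exp (N : ℕ) {t : ℝ} (ht : 0 < t) :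
    bellTwo N ≤ (N / (exp 1 * t)) ^ N * exp (exp t) / exp 1 := by
  rw [bellTwo_eq_tsum, ← tsum_pow_div_factorial (exp t), ← tsum_mul_left]
  refine div_le_div_of_nonneg_right (Summable.tsum_le_tsum (fun k => ?_)
    (by simpa using summable_pow_mul_exp_div_factorial N 0)
    ((summable_pow_div_factorial _).mul_left _)) (exp_pos 1).le
  rw [← exp_nat_mul, mul_div_assoc', mul_comm (k : ℝ) t]
  gcongr
  exact pow_le_mul_exp N ht k.cast_nonneg

theorem bellTwo_mul_le (m E : ℕ) (hm : 0 < m) (hE : exp m ≤ E) :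
    bellTwo (m * E) ≤ (E / exp 1) ^ (m * E) * exp 1 ^ E / exp 1 := by
  calc bellTwo (m * E) ≤ ((m * E : ℕ) / (exp 1 * m)) ^ (m * E) * exp (exp m) / exp 1 :=
        bellTwo_le_pow_mul_exp_exp _ (by positivity)
    _ ≤ _ := by
      have hNt : ((m * E : ℕ) : ℝ) / (exp 1 * m) = E / exp 1 := by push_cast; field_simp
      rw [exp_one_pow, hNt]
      gcongr

theorem two_mul_exp_one_pow_le_of_bellTwo_add_self_le {c : ℝ} (hc : 0 < c)
    (H : ∀ n : ℕ, bellTwo (n + n) ≤ c ^ (n + n) * (bellTwo n * bellTwo n))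
    (m E : ℕ) (hm : 0 < m) (hE : exp m ≤ E) :
    (2 * exp 1) ^ m ≤ 2 * E * c ^ m * exp 1 := by
  have hE0 : 0 < E := Nat.cast_pos.1 ((exp_pos _).trans_le hE)
  obtain ⟨n, hn⟩ : ∃ n, n = m * E := ⟨_, rfl⟩
  have hnn : n + n = m * (2 * E) := by rw [hn]; ring
  have hlow : (2 * E : ℝ) ^ (n + n) ≤ exp 1 * (2 * E) ^ (2 * E) * bellTwo (n + n) := by
    have h := pow_div_factorial_le_bellTwo (n + n) (2 * E)
    rw [div_div, div_le_iff₀ (by positivity)] at h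
    calc _ ≤ bellTwo (n + n) * ((2 * E)! * exp 1) := mod_cast h
      _ ≤ bellTwo (n + n) * ((2 * E : ℝ) ^ (2 * E) * exp 1) := by
        have := zero_le_one.trans (one_le_bellTwo (n + n))
        gcongr
        exact_mod_cast Nat.factorial_le_pow _
      _ = _ := by ring
  have hup := hn ▸ bellTwo_mul_le m E hm hE
  have hb := zero_le_one.trans (one_le_bellTwo n)
  have key : (2 * exp 1) ^ (n + n) * (E / exp 1) ^ (n + n) ≤
      (2 * E) ^ (2 * E) * c ^ (n + n) * (exp 1 ^ E) ^ 2 / exp 1 * (E / exp 1) ^ (n + n) :=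
    calc _ = (2 * E : ℝ) ^ (n + n) := by rw [← mul_pow]; field_simp
      _ ≤ exp 1 * (2 * E) ^ (2 * E) * (c ^ (n + n) * (bellTwo n * bellTwo n)) := by
        grw [hlow, H n]
      _ ≤ exp 1 * (2 * E) ^ (2 * E) *
          (c ^ (n + n) * ((E / exp 1) ^ n * exp 1 ^ E / exp 1) ^ 2) := by
        rw [sq]; gcongr
      _ = _ := by field_simp; ring
  have hpow : ((2 * exp 1) ^ m) ^ (2 * E) ≤ (2 * E * c ^ m * exp 1) ^ (2 * E) :=
    calc _ = (2 * exp 1) ^ (n + n) := by rw [← pow_mul, hnn]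
      _ ≤ _ := le_of_mul_le_mul_right key (by positivity)
      _ ≤ (2 * E) ^ (2 * E) * c ^ (n + n) * (exp 1 ^ E) ^ 2 :=
        div_le_self (by positivity) (one_le_exp zero_le_one)
      _ = _ := by rw [mul_pow _ (exp 1), mul_pow _ (c ^ m), ← pow_mul, ← pow_mul, hnn]; ring
  exact (pow_le_pow_iff_left₀ (by positivity) (by positivity) (by omega)).1 hpow

theorem two_pow_le_of_bellTwo_add_self_le {c : ℝ} (hc : 0 < c)
    (H : ∀ n : ℕ, bellTwo (n + n) ≤ c ^ (n + n) * (bellTwo n * bellTwo n))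
    {m : ℕ} (hm : 0 < m) :
    (2 : ℝ) ^ m ≤ 4 * exp 1 * c ^ m := by
  have hE : (⌈exp m⌉₊ : ℝ) ≤ 2 * exp m := by
    linarith [Nat.ceil_lt_add_one (exp_pos (m : ℝ)).le, one_le_exp m.cast_nonneg]
  refine le_of_mul_le_mul_right (a := exp m) ?_ (exp_pos _)
  calc (2 : ℝ) ^ m * exp m = (2 * exp 1) ^ m := by rw [mul_pow, exp_one_pow]
    _ ≤ 2 * ⌈exp m⌉₊ * c ^ m * exp 1 :=
      two_mul_exp_one_pow_le_of_bellTwo_add_self_le hc H m _ hm (Nat.le_ceil _)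
    _ ≤ 2 * (2 * exp m) * c ^ m * exp 1 := by gcongr
    _ = _ := by ring

/-- The best constant in condition (c-2) for the classical Bell numbers is `2`:
any `c > 0` with `bellTwo (n+m) ≤ c^(n+m) * bellTwo n * bellTwo m` for all `n, m`
satisfies `c ≥ 2`, and `c = 2` does satisfy these inequalities. -/
theorem bellTwo_best_constant :
    (∀ c : ℝ, 0 < c →
      (∀ n m : ℕ, bellTwo (n + m) ≤ c ^ (n + m) * (bellTwo n * bellTwo m)) → 2 ≤ c) ∧
    (∀ n m : ℕ, bellTwo (n + m) ≤ 2 ^ (n + m) * (bellTwo n * bellTwo m)) :=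
  ⟨fun _ hc H => le_of_forall_pow_le_mul_pow hc fun _ hm =>
      two_pow_le_of_bellTwo_add_self_le hc (fun n => H n n) hm,
    bellTwo_add_le_two_pow_mul⟩
end
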